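/- With φ_{η,ζ} as above, φ_{η,ζ} is continuous on C. -/

import Mathlib

open Real

/-- The bending map `φ_{η,ζ} : ℂ → ℂ`: identity on the sector
`|arg z| ≥ π - ζ`, rotation by `η` on the sector `|arg z| ≤ ζ`, and linear
interpolation of the rotation angle in `arg z` on the two remaining sectors. -/
noncomputable def bend (η ζ : ℝ) (z : ℂ) : ℂ :=
  if z = 0 then 0
  else if π - ζ ≤ |z.arg| then z
  else if |z.arg| ≤ ζ then z * Complex.exp ((η : ℂ) * Complex.I)
  else if 0 < z.arg then
    z * Complex.exp (((η * (1 - (z.arg - ζ) / (π - 2 * ζ))) : ℝ) * Complex.I)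
  else
    z * Complex.exp (((η * (1 + (z.arg + ζ) / (π - 2 * ζ))) : ℝ) * Complex.I)

/-- Global continuous angle function. -/
noncomputable def gfun (η ζ : ℝ) (θ : ℝ) : ℝ :=
  η * min 1 (max 0 ((π - ζ - |θ|) / (π - 2 * ζ)))

lemma gfun_cont (η ζ : ℝ) : Continuous (gfun η ζ) := by
  unfold gfun
  fun_prop

lemma bend_eq (η ζ : ℝ) (hζ0 : 0 < ζ) (hζ : ζ < π / 2) {z : ℂ} (hz : z ≠ 0) :
    bend η ζ z = z * Complex.exp ((gfun η ζ z.arg : ℂ) * Complex.I) := by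
  have hd : 0 < π - 2 * ζ := by linarith
  unfold bend gfun
  rw [if_neg hz]
  split_ifs with h1 h2 h3
  · have hq : (π - ζ - |z.arg|) / (π - 2 * ζ) ≤ 0 :=
      div_nonpos_of_nonpos_of_nonneg (by linarith) (le_of_lt hd)
    rw [max_eq_left hq, min_eq_right (by norm_num : (0:ℝ) ≤ 1)]
    simp
  · have hq : 1 ≤ (π - ζ - |z.arg|) / (π - 2 * ζ) :=
      (one_le_div hd).mpr (by linarith)
    rw [max_eq_right (by linarith : (0:ℝ) ≤ _), min_eq_left hq]
    norm_num
  · push_neg at h1 h2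
    have habs : |z.arg| = z.arg := abs_of_pos h3
    rw [habs] at h1 h2 ⊢
    have hq0 : 0 ≤ (π - ζ - z.arg) / (π - 2 * ζ) :=
      div_nonneg (by linarith) (le_of_lt hd)
    have hq1 : (π - ζ - z.arg) / (π - 2 * ζ) ≤ 1 :=
      (div_le_one hd).mpr (by linarith)
    rw [max_eq_right hq0, min_eq_right hq1]
    congr 4
    have hd' : π - 2 * ζ ≠ 0 := hd.ne'
    rw [one_sub_div hd']
    ring
  · push_neg at h1 h2 h3
    have hne : z.arg ≠ 0 := by
      intro h; rw [h] at h2; simp at h2; linarith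
    have hneg : z.arg < 0 := lt_of_le_of_ne h3 hne
    have habs : |z.arg| = -z.arg := abs_of_neg hneg
    rw [habs] at h1 h2
    rw [habs]
    have hq0 : 0 ≤ (π - ζ - -z.arg) / (π - 2 * ζ) :=
      div_nonneg (by linarith) (le_of_lt hd)
    have hq1 : (π - ζ - -z.arg) / (π - 2 * ζ) ≤ 1 :=
      (div_le_one hd).mpr (by linarith)
    rw [max_eq_right hq0, min_eq_right hq1]
    congr 4
    have hd' : π - 2 * ζ ≠ 0 := hd.ne'
    rw [one_add_div hd']
    ring

lemma bend_abs (η ζ : ℝ) (hζ0 : 0 < ζ) (hζ : ζ < π / 2) (z : ℂ) :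
    ‖bend η ζ z‖ = ‖z‖ := by
  by_cases hz : z = 0
  · simp [hz, bend]
  · rw [bend_eq η ζ hζ0 hζ hz, norm_mul, Complex.norm_exp_ofReal_mul_I, mul_one]

/-- For `0 < ζ < π/2` and `0 ≤ η < π - 2ζ`, the bending map `φ_{η,ζ}` is
continuous on `ℂ`. -/
theorem bend_continuous (η ζ : ℝ)
    (hζ0 : 0 < ζ) (hζ : ζ < π / 2) (hη0 : 0 ≤ η) (hη : η < π - 2 * ζ) :
    Continuous (bend η ζ) := by
  rw [continuous_iff_continuousAt]
  intro z₀
  by_cases hz0 : z₀ = 0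
  · subst hz0
    have h0 : bend η ζ 0 = 0 := by simp [bend]
    rw [ContinuousAt, h0]
    exact squeeze_zero_norm
      (fun z => le_of_eq (by rw [
        bend_abs η ζ hζ0 hζ])) tendsto_norm_zero
  · by_cases hsl : z₀ ∈ Complex.slitPlane
    · -- arg is continuous at z₀
      have harg : ContinuousAt Complex.arg z₀ := Complex.continuousAt_arg hsl
      have hF : ContinuousAt
          (fun z : ℂ => z * Complex.exp ((gfun η ζ z.arg : ℂ) * Complex.I)) z₀ := by
        apply continuousAt_id.mul
        apply Complex.continuous_exp.continuousAt.comp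
        exact (ContinuousAt.mul
          (Complex.continuous_ofReal.continuousAt.comp
            ((gfun_cont η ζ).continuousAt.comp harg)) continuousAt_const)
      apply hF.congr
      have : ∀ᶠ z : ℂ in nhds z₀, z ≠ 0 :=
        eventually_ne_nhds hz0
      filter_upwards [this] with z hz
      exact (bend_eq η ζ hζ0 hζ hz).symm
    · -- z₀ is on the negative real axis
      simp only [Complex.mem_slitPlane_iff, not_or, not_lt, not_ne_iff] at hsl
      obtain ⟨hre0, him⟩ := hsl
      have hre : z₀.re < 0 := by
        rcases lt_or_eq_of_le hre0 with h | h
        · exact h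
        · exact absurd (by simp [Complex.ext_iff, ← h, him] : z₀ = 0) hz0
      have habs0 : ‖z₀‖ = -z₀.re := by
        rw [Complex.norm_def, Complex.normSq_apply, him]
        rw [show z₀.re * z₀.re + 0 * 0 = (-z₀.re) ^ 2 by ring]
        exact Real.sqrt_sq (by linarith)
      have hcosζ : Real.cos ζ < 1 := by
        have := Real.strictAntiOn_cos (Set.mem_Icc.mpr ⟨le_refl 0, Real.pi_pos.le⟩)
          (Set.mem_Icc.mpr ⟨hζ0.le, by linarith [Real.pi_pos]⟩) hζ0
        simpa using this
      have htend : Filter.Tendsto (fun z : ℂ => z.re / ‖z‖)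
          (nhds z₀) (nhds (-1 : ℝ)) := by
        have : ContinuousAt (fun z : ℂ => z.re / ‖z‖) z₀ := by
          apply ContinuousAt.div
          · exact Complex.continuous_re.continuousAt
          · exact continuous_norm.continuousAt
          · exact norm_ne_zero_iff.mpr hz0
        have hval : z₀.re / ‖z₀‖ = -1 := by
          rw [habs0, div_neg, div_self hre.ne]
        rw [← hval]; exact this
      have hev : ∀ᶠ z : ℂ in nhds z₀, z.re / ‖z‖ < -Real.cos ζ :=
        htend.eventually_lt_const (by linarith)
      have hev' : ∀ᶠ z : ℂ in nhds z₀, bend η ζ z = z := by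
        filter_upwards [hev, eventually_ne_nhds hz0] with z hzlt hzne
        have hcos : Real.cos z.arg < Real.cos (π - ζ) := by
          rw [Complex.cos_arg hzne, Real.cos_pi_sub]
          exact hzlt
        have hargle : π - ζ ≤ |z.arg| := by
          by_contra hcon
          push_neg at hcon
          have : Real.cos (π - ζ) ≤ Real.cos |z.arg| :=
            Real.cos_le_cos_of_nonneg_of_le_pi (abs_nonneg _)
              (by linarith [Real.pi_pos]) hcon.le
          rw [Real.cos_abs] at this
          linarith
        unfold bend
        rw [if_neg hzne, if_pos hargle]
      exact continuousAt_id.congr (hev'.mono fun z h => h.symm)
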